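/- The function Ψ(σ) = 2^(σ+6) · σ^(σ+2) · (2−σ)^(−(2−σ)²/2) · (2+σ)^(−(2+σ)²/2) satisfies Ψ(σ) < 1 for all σ ∈ (0, 2). -/

import Mathlib

open Real

noncomputable def Psi (σ : ℝ) : ℝ :=
  2 ^ (σ + 6) * σ ^ (σ + 2) * (2 - σ) ^ (-(2 - σ) ^ 2 / 2) * (2 + σ) ^ (-(2 + σ) ^ 2 / 2)

lemma padeL {x : ℝ} (hx : 1 ≤ x) : 3*(x^2-1)/(x^2+4*x+1) ≤ Real.log x := by
  set f : ℝ → ℝ := fun y => Real.log y - 3*(y^2-1)/(y^2+4*y+1) with hf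
  have key : MonotoneOn f (Set.Ici 1) := by
    have hc : ContinuousOn f (Set.Ici 1) := by
      apply ContinuousOn.sub
      · exact Real.continuousOn_log.mono (by intro y hy; simp at hy ⊢; linarith)
      · apply ContinuousOn.div
        · fun_prop
        · fun_prop
        · intro y hy; simp at hy; nlinarith
    apply monotoneOn_of_deriv_nonneg (convex_Ici 1) hc
    · intro y hy
      rw [interior_Ici] at hy
      simp only [Set.mem_Ioi] at hy
      have hy0 : (0:ℝ) < y := by linarith
      have hd : y^2+4*y+1 ≠ 0 := by nlinarith
      apply DifferentiableAt.differentiableWithinAt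
      apply DifferentiableAt.sub
      · exact Real.differentiableAt_log (ne_of_gt hy0)
      · apply DifferentiableAt.div <;> try fun_prop
        exact hd
    · intro y hy
      rw [interior_Ici] at hy
      simp only [Set.mem_Ioi] at hy
      have hy0 : (0:ℝ) < y := by linarith
      have hd : (0:ℝ) < y^2+4*y+1 := by nlinarith
      have h1 : HasDerivAt (fun y : ℝ => 3*(y^2-1)/(y^2+4*y+1))
          ((3*(2*y)*(y^2+4*y+1) - 3*(y^2-1)*(2*y+4))/(y^2+4*y+1)^2) y := by
        have ha : HasDerivAt (fun y : ℝ => 3*(y^2-1)) (3*(2*y)) y := by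
          simpa using ((hasDerivAt_pow 2 y).sub_const 1).const_mul 3
        have hb : HasDerivAt (fun y : ℝ => y^2+4*y+1) (2*y+4) y := by
          simpa using ((hasDerivAt_pow 2 y).add ((hasDerivAt_id y).const_mul 4)).add_const 1
        exact ha.div hb (ne_of_gt hd)
      have h2 : HasDerivAt f (y⁻¹ - (3*(2*y)*(y^2+4*y+1) - 3*(y^2-1)*(2*y+4))/(y^2+4*y+1)^2) y :=
        (Real.hasDerivAt_log (ne_of_gt hy0)).sub h1
      rw [h2.deriv]
      rw [sub_nonneg, inv_eq_one_div, div_le_div_iff₀ (by positivity) hy0]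
      nlinarith [sq_nonneg (y-1), sq_nonneg ((y-1)^2)]
  have := key (Set.self_mem_Ici) (Set.mem_Ici.mpr hx) hx
  simp only [hf] at this
  simp at this
  linarith [this]

lemma padeU {x : ℝ} (hx : 1 ≤ x) : Real.log x ≤ (x^2-1)/(2*x) := by
  set f : ℝ → ℝ := fun y => (y^2-1)/(2*y) - Real.log y with hf
  have key : MonotoneOn f (Set.Ici 1) := by
    have hc : ContinuousOn f (Set.Ici 1) := by
      apply ContinuousOn.sub
      · apply ContinuousOn.div
        · fun_prop
        · fun_prop
        · intro y hy; simp at hy; nlinarith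
      · exact Real.continuousOn_log.mono (by intro y hy; simp at hy ⊢; linarith)
    apply monotoneOn_of_deriv_nonneg (convex_Ici 1) hc
    · intro y hy
      rw [interior_Ici] at hy
      simp only [Set.mem_Ioi] at hy
      have hy0 : (0:ℝ) < y := by linarith
      apply DifferentiableAt.differentiableWithinAt
      apply DifferentiableAt.sub
      · apply DifferentiableAt.div <;> try fun_prop
        positivity
      · exact Real.differentiableAt_log (ne_of_gt hy0)
    · intro y hy
      rw [interior_Ici] at hy
      simp only [Set.mem_Ioi] at hy
      have hy0 : (0:ℝ) < y := by linarith
      have h1 : HasDerivAt (fun y : ℝ => (y^2-1)/(2*y))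
          (((2*y)*(2*y) - (y^2-1)*2)/(2*y)^2) y := by
        have ha : HasDerivAt (fun y : ℝ => y^2-1) (2*y) y := by
          simpa using (hasDerivAt_pow 2 y).sub_const 1
        have hb : HasDerivAt (fun y : ℝ => 2*y) 2 y := by
          simpa using (hasDerivAt_id y).const_mul 2
        exact ha.div hb (by positivity)
      have h2 : HasDerivAt f (((2*y)*(2*y) - (y^2-1)*2)/(2*y)^2 - y⁻¹) y :=
        h1.sub (Real.hasDerivAt_log (ne_of_gt hy0))
      rw [h2.deriv]
      rw [sub_nonneg, inv_eq_one_div, div_le_div_iff₀ hy0 (by positivity)]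
      nlinarith [sq_nonneg (y-1)]
  have := key (Set.self_mem_Ici) (Set.mem_Ici.mpr hx) hx
  simp only [hf] at this
  simp at this
  linarith [this]

set_option maxHeartbeats 1000000 in
theorem stmt7 : ∀ σ ∈ Set.Ioo (0 : ℝ) 2, Psi σ < 1 := by
  rintro σ ⟨h0, h2⟩
  have hm : (0:ℝ) < 2 - σ := by linarith
  have hp : (0:ℝ) < 2 + σ := by linarith
  have hPsi : 0 < Psi σ := by
    unfold Psi
    positivity
  rw [show (1:ℝ) = Real.exp 0 by simp, ← Real.exp_log hPsi]
  apply Real.exp_lt_exp.mpr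
  have hlog : Real.log (Psi σ) = (σ+6)*Real.log 2 + (σ+2)*Real.log σ
      + (-(2-σ)^2/2)*Real.log (2-σ) + (-(2+σ)^2/2)*Real.log (2+σ) := by
    unfold Psi
    rw [Real.log_mul (by positivity) (by positivity), Real.log_mul (by positivity) (by positivity),
        Real.log_mul (by positivity) (by positivity),
        Real.log_rpow two_pos, Real.log_rpow h0, Real.log_rpow hm, Real.log_rpow hp]
  rw [hlog]
  -- bounds
  have h1 : Real.log σ ≤ Real.log 2 - 3*(4-σ^2)/(σ^2+8*σ+4) := by
    have hx : 1 ≤ 2/σ := (le_div_iff₀ h0).mpr (by linarith)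
    have := padeL hx
    rw [Real.log_div two_ne_zero (ne_of_gt h0)] at this
    have e : 3*((2/σ)^2-1)/((2/σ)^2+4*(2/σ)+1) = 3*(4-σ^2)/(σ^2+8*σ+4) := by
      rw [div_eq_div_iff]
      · field_simp
        ring
      · have h4 : (0:ℝ) < (2/σ)^2+4*(2/σ)+1 := by positivity
        exact ne_of_gt h4
      · nlinarith
    rw [e] at this
    linarith
  have h2' : Real.log 2 - σ*(4-σ)/(4*(2-σ)) ≤ Real.log (2-σ) := by
    have hx : 1 ≤ 2/(2-σ) := (le_div_iff₀ hm).mpr (by linarith)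
    have := padeU hx
    rw [Real.log_div two_ne_zero (ne_of_gt hm)] at this
    have e : ((2/(2-σ))^2-1)/(2*(2/(2-σ))) = σ*(4-σ)/(4*(2-σ)) := by
      rw [div_eq_div_iff]
      · field_simp
        ring
      · positivity
      · positivity
    rw [e] at this
    linarith
  have h3 : Real.log 2 + 3*σ*(σ+4)/(σ^2+12*σ+24) ≤ Real.log (2+σ) := by
    have hx : 1 ≤ (2+σ)/2 := by linarith [(le_div_iff₀ (two_pos : (0:ℝ) < 2)).mpr (by linarith : (1:ℝ)*2 ≤ 2+σ)]
    have := padeL hx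
    rw [Real.log_div (ne_of_gt hp) two_ne_zero] at this
    have e : 3*(((2+σ)/2)^2-1)/(((2+σ)/2)^2+4*((2+σ)/2)+1) = 3*σ*(σ+4)/(σ^2+12*σ+24) := by
      rw [div_eq_div_iff]
      · field_simp
        ring
      · positivity
      · nlinarith
    rw [e] at this
    linarith
  have hL : Real.log 2 < 0.6931471808 := Real.log_two_lt_d9
  -- combine
  have t1 : (σ+2)*Real.log σ ≤ (σ+2)*(Real.log 2 - 3*(4-σ^2)/(σ^2+8*σ+4)) :=
    mul_le_mul_of_nonneg_left h1 (by linarith)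
  have t2 : (-(2-σ)^2/2)*Real.log (2-σ) ≤ (-(2-σ)^2/2)*(Real.log 2 - σ*(4-σ)/(4*(2-σ))) := by
    apply mul_le_mul_of_nonpos_left h2' (by nlinarith [sq_nonneg (2-σ)])
  have t3 : (-(2+σ)^2/2)*Real.log (2+σ) ≤ (-(2+σ)^2/2)*(Real.log 2 + 3*σ*(σ+4)/(σ^2+12*σ+24)) := by
    apply mul_le_mul_of_nonpos_left h3 (by nlinarith [sq_nonneg (2+σ)])
  have key : (σ+6)*Real.log 2 + (σ+2)*(Real.log 2 - 3*(4-σ^2)/(σ^2+8*σ+4))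
      + (-(2-σ)^2/2)*(Real.log 2 - σ*(4-σ)/(4*(2-σ)))
      + (-(2+σ)^2/2)*(Real.log 2 + 3*σ*(σ+4)/(σ^2+12*σ+24)) < 0 := by
    have hD1 : (0:ℝ) < σ^2+8*σ+4 := by positivity
    have hD2 : (0:ℝ) < σ^2+12*σ+24 := by positivity
    have hcoef : (0:ℝ) < 2*σ+4-σ^2 := by nlinarith
    have e : (σ+6)*Real.log 2 + (σ+2)*(Real.log 2 - 3*(4-σ^2)/(σ^2+8*σ+4))
      + (-(2-σ)^2/2)*(Real.log 2 - σ*(4-σ)/(4*(2-σ)))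
      + (-(2+σ)^2/2)*(Real.log 2 + 3*σ*(σ+4)/(σ^2+12*σ+24))
      = ((2*σ+4-σ^2)*Real.log 2 * (8*(σ^2+8*σ+4)*(σ^2+12*σ+24))
        + ((-4608) + (-4608)*σ + (-1344)*σ^2 + (-1792)*σ^3 + (-1064)*σ^4 + (-156)*σ^5
           + 2*σ^6 + σ^7)) / (8*(σ^2+8*σ+4)*(σ^2+12*σ+24)) := by
      field_simp
      ring
    rw [e]
    apply div_neg_of_neg_of_pos _ (by positivity)
    have hb : (2*σ+4-σ^2)*Real.log 2 * (8*(σ^2+8*σ+4)*(σ^2+12*σ+24))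
        ≤ (2*σ+4-σ^2)*0.6931471808 * (8*(σ^2+8*σ+4)*(σ^2+12*σ+24)) := by
      apply mul_le_mul_of_nonneg_right _ (by positivity)
      exact mul_le_mul_of_nonneg_left (le_of_lt hL) (le_of_lt hcoef)
    have hpoly : (2*σ+4-σ^2)*0.6931471808 * (8*(σ^2+8*σ+4)*(σ^2+12*σ+24))
        + ((-4608) + (-4608)*σ + (-1344)*σ^2 + (-1792)*σ^3 + (-1064)*σ^4 + (-156)*σ^5
           + 2*σ^6 + σ^7) < 0 := by
      nlinarith [mul_pos h0 hm, sq_nonneg (σ - 0.885), sq_nonneg σ, sq_nonneg (σ*(σ-0.885)),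
        sq_nonneg (σ^2*(σ-0.885)), mul_pos (mul_pos h0 h0) hm, sq_nonneg (σ-1), sq_nonneg (σ^2-1),
        mul_pos (mul_pos h0 hm) hm]
    linarith
  linarith
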